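/- For each n ∈ ℕ there exists B > 0 such that for all finitely supported sequences {c_{k,l,m}} ∈ ℓ²(ℤ³), ‖Σ_{k,l,m} c_{k,l,m} L_{(2k,l,m)}φₙ‖²_{L²} ≤ B ‖{c_{k,l,m}}‖²_{ℓ²}; in fact one may take B = 2^{n−1}. -/

import Mathlib

/-!
For `n = 1` the functions `L_{(2k,l,m)} φ₁` are `1/√2` times the indicators of the left
translates of `Q` by the lattice `Γ = {(2k, l, m)}`. The factor `2` makes `Γ` a subgroup, and two
distinct translates `γQ`, `γ'Q` meet in a null set because `Q ∩ γ⁻¹γ'Q` is null; so these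
functions are orthonormal and the bound holds with equality. Left translation commutes with right
convolution, so `∑ c_γ L_γ φₙ₊₁ = (∑ c_γ L_γ φₙ) * φ₁`, and Young's inequality
`‖f * g‖₂ ≤ ‖f‖₂ ‖g‖₁` with `‖φ₁‖₁ = √2` doubles the constant at each step.
-/

open MeasureTheory

/-- Heisenberg group multiplication on ℝ³. -/
noncomputable def Hmul (a b : ℝ × ℝ × ℝ) : ℝ × ℝ × ℝ :=
  (a.1 + b.1, a.2.1 + b.2.1, a.2.2 + b.2.2 + (b.1 * a.2.1 - b.2.1 * a.1) / 2)

/-- Heisenberg group inverse. -/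
noncomputable def Hinv (a : ℝ × ℝ × ℝ) : ℝ × ℝ × ℝ := (-a.1, -a.2.1, -a.2.2)

/-- Group convolution on the Heisenberg group. -/
noncomputable def Hconv (f g : ℝ × ℝ × ℝ → ℝ) : ℝ × ℝ × ℝ → ℝ :=
  fun p => ∫ q : ℝ × ℝ × ℝ, f (Hmul p (Hinv q)) * g q

/-- The fundamental domain Q = [0,2]×[0,1]×[0,1]. -/
noncomputable def Q : Set (ℝ × ℝ × ℝ) :=
  Set.Icc (0 : ℝ) 2 ×ˢ Set.Icc (0 : ℝ) 1 ×ˢ Set.Icc (0 : ℝ) 1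

/-- The B-splines on the Heisenberg group: φ₁ = (1/√2)·χ_Q, φₙ = φₙ₋₁ * φ₁. -/
noncomputable def phi : ℕ → (ℝ × ℝ × ℝ → ℝ)
  | 0 => fun _ => 0
  | 1 => fun p => Q.indicator (fun _ => (Real.sqrt 2)⁻¹) p
  | (n + 2) => Hconv (phi (n + 1)) (phi 1)

/-- Left translation on the Heisenberg group. -/
noncomputable def Ltr (a : ℝ × ℝ × ℝ) (f : ℝ × ℝ × ℝ → ℝ) : ℝ × ℝ × ℝ → ℝ :=
  fun p => f (Hmul (Hinv a) p)

open scoped ENNReal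

lemma Hmul_assoc (a b c : ℝ × ℝ × ℝ) : Hmul (Hmul a b) c = Hmul a (Hmul b c) := by
  ext <;> simp only [Hmul] <;> ring

lemma measurable_Hmul_Hinv :
    Measurable fun z : (ℝ × ℝ × ℝ) × (ℝ × ℝ × ℝ) => Hmul z.1 (Hinv z.2) := by
  unfold Hmul Hinv
  fun_prop

lemma measurePreserving_affine_shear (u v w α β : ℝ) :
    MeasurePreserving (fun p : ℝ × ℝ × ℝ => (p.1 + u, p.2.1 + v, p.2.2 + w + α * p.1 + β * p.2.1))
      volume volume := by
  have fiber (x : ℝ) : MeasurePreserving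
      (fun c : ℝ × ℝ => (c.1 + v, c.2 + (w + α * x + β * c.1))) volume volume := by
    rw [Measure.volume_eq_prod]
    exact (measurePreserving_add_right volume v).skew_product
      (g := fun y t => t + (w + α * x + β * y)) (by fun_prop)
      (ae_of_all _ fun y => map_add_right_eq_self volume _)
  have total : MeasurePreserving
      (fun p : ℝ × ℝ × ℝ => (p.1 + u, p.2.1 + v, p.2.2 + (w + α * p.1 + β * p.2.1)))
      volume volume := by
    rw [Measure.volume_eq_prod]
    exact (measurePreserving_add_right volume u).skew_product
      (g := fun x (c : ℝ × ℝ) => (c.1 + v, c.2 + (w + α * x + β * c.1))) (by fun_prop)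
      (ae_of_all _ fun x => (fiber x).map_eq)
  convert total using 4 with p
  ring

lemma measurePreserving_Hmul_left (b : ℝ × ℝ × ℝ) :
    MeasurePreserving (Hmul b) volume volume := by
  convert measurePreserving_affine_shear b.1 b.2.1 b.2.2 (b.2.1 / 2) (-b.1 / 2) using 2 with p
  ext <;> simp only [Hmul] <;> ring

lemma measurePreserving_Hmul_right (b : ℝ × ℝ × ℝ) :
    MeasurePreserving (fun p => Hmul p b) volume volume := by
  convert measurePreserving_affine_shear b.1 b.2.1 b.2.2 (-b.2.1 / 2) (b.1 / 2) using 2 with p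
  simp only [Hmul, Prod.mk.injEq, true_and]
  ring

lemma Ltr_Hconv (a : ℝ × ℝ × ℝ) (f g : ℝ × ℝ × ℝ → ℝ) :
    Ltr a (Hconv f g) = Hconv (Ltr a f) g := by
  funext p
  simp only [Ltr, Hconv, Hmul_assoc]

lemma Measurable.Ltr {f : ℝ × ℝ × ℝ → ℝ} (hf : Measurable f) (a : ℝ × ℝ × ℝ) :
    Measurable (Ltr a f) :=
  hf.comp (measurePreserving_Hmul_left _).measurable

lemma Measurable.Hconv {f g : ℝ × ℝ × ℝ → ℝ} (hf : Measurable f) (hg : Measurable g) :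
    Measurable (Hconv f g) :=
  (((hf.comp measurable_Hmul_Hinv).mul (hg.comp measurable_snd)).stronglyMeasurable
    |>.integral_prod_right').measurable

lemma integrable_Hconv_integrand {f g : ℝ × ℝ × ℝ → ℝ} {C : ℝ} (hf : Measurable f)
    (hfC : ∀ p, |f p| ≤ C) (hg : Integrable g) (p : ℝ × ℝ × ℝ) :
    Integrable fun q => f (Hmul p (Hinv q)) * g q :=
  hg.bdd_mul (hf.comp (measurable_Hmul_Hinv.comp measurable_prodMk_left)).aestronglyMeasurable
    (ae_of_all _ fun _ => hfC _)

lemma abs_Hconv_le {f g : ℝ × ℝ × ℝ → ℝ} {C : ℝ} (hfC : ∀ p, |f p| ≤ C) (hg : Integrable g)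
    (p : ℝ × ℝ × ℝ) : |Hconv f g p| ≤ C * ∫ q, |g q| := by
  rw [Hconv, ← Real.norm_eq_abs, ← integral_const_mul C fun q => |g q|]
  refine norm_integral_le_of_norm_le (hg.abs.const_mul C) (ae_of_all _ fun q => ?_)
  rw [Real.norm_eq_abs, abs_mul]
  exact mul_le_mul_of_nonneg_right (hfC _) (abs_nonneg _)

lemma Hconv_sum {ι : Type*} (s : Finset ι) (c : ι → ℝ) {f : ι → ℝ × ℝ × ℝ → ℝ}
    {g : ℝ × ℝ × ℝ → ℝ} (hf : ∀ i ∈ s, ∀ p, Integrable fun q => f i (Hmul p (Hinv q)) * g q) :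
    Hconv (fun p => ∑ i ∈ s, c i * f i p) g = fun p => ∑ i ∈ s, c i * Hconv (f i) g p := by
  funext p
  simp only [Hconv, Finset.sum_mul, mul_assoc, ← integral_const_mul]
  exact integral_finsetSum s fun i hi => (hf i hi p).const_mul (c i)

lemma lintegral_mul_sq_le {α : Type*} [MeasurableSpace α] (μ : Measure α) {F w : α → ℝ≥0∞}
    (hF : AEMeasurable F μ) (hw : AEMeasurable w μ) :
    (∫⁻ a, F a * w a ∂μ) ^ 2 ≤ (∫⁻ a, w a ∂μ) * ∫⁻ a, F a ^ 2 * w a ∂μ := by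
  -- Cauchy–Schwarz for `F` and `1` with respect to the measure `w • μ`.
  have hFν : AEMeasurable F (μ.withDensity w) :=
    hF.mono' (withDensity_absolutelyContinuous μ w)
  have hCS := ENNReal.lintegral_mul_le_Lp_mul_Lq _ Real.HolderConjugate.two_two hFν
    (aemeasurable_const (b := (1 : ℝ≥0∞)))
  simp only [Pi.mul_apply, mul_one, lintegral_const, withDensity_apply _ MeasurableSet.univ,
    Measure.restrict_univ, ENNReal.rpow_two, one_pow, one_mul] at hCS
  rw [lintegral_withDensity_eq_lintegral_mul₀ hw hF,
    lintegral_withDensity_eq_lintegral_mul₀ hw (hF.pow_const 2)] at hCS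
  calc (∫⁻ a, F a * w a ∂μ) ^ 2
      ≤ ((∫⁻ a, F a ^ 2 * w a ∂μ) ^ (1 / 2 : ℝ) * (∫⁻ a, w a ∂μ) ^ (1 / 2 : ℝ)) ^ 2 := by
        simpa only [Pi.mul_apply, mul_comm (w _)] using pow_le_pow_left₀ zero_le hCS 2
    _ = (∫⁻ a, w a ∂μ) * ∫⁻ a, F a ^ 2 * w a ∂μ := by
        rw [mul_pow, ← ENNReal.rpow_natCast, ← ENNReal.rpow_natCast, ← ENNReal.rpow_mul,
          ← ENNReal.rpow_mul]
        norm_num [mul_comm]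

lemma lintegral_enorm_Hconv_sq_le {f g : ℝ × ℝ × ℝ → ℝ} (hf : Measurable f)
    (hg : Measurable g) :
    ∫⁻ p, ‖Hconv f g p‖ₑ ^ 2 ≤ (∫⁻ q, ‖g q‖ₑ) ^ 2 * ∫⁻ p, ‖f p‖ₑ ^ 2 := by
  set K : (ℝ × ℝ × ℝ) × (ℝ × ℝ × ℝ) → ℝ≥0∞ := fun z => ‖f (Hmul z.1 (Hinv z.2))‖ₑ ^ 2 * ‖g z.2‖ₑ
  have hK : Measurable K :=
    ((hf.comp measurable_Hmul_Hinv).enorm.pow_const 2).mul (hg.comp measurable_snd).enorm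
  have pointwise (p : ℝ × ℝ × ℝ) :
      ‖Hconv f g p‖ₑ ^ 2 ≤ (∫⁻ q, ‖g q‖ₑ) * ∫⁻ q, K (p, q) := by
    calc ‖Hconv f g p‖ₑ ^ 2 ≤ (∫⁻ q, ‖f (Hmul p (Hinv q))‖ₑ * ‖g q‖ₑ) ^ 2 := by
          gcongr
          simpa only [Hconv, enorm_mul] using
            enorm_integral_le_lintegral_enorm fun q => f (Hmul p (Hinv q)) * g q
      _ ≤ _ := lintegral_mul_sq_le _
          (hf.comp (measurable_Hmul_Hinv.comp measurable_prodMk_left)).enorm.aemeasurable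
          hg.enorm.aemeasurable
  have right_invariance (q : ℝ × ℝ × ℝ) :
      ∫⁻ p, K (p, q) = (∫⁻ p, ‖f p‖ₑ ^ 2) * ‖g q‖ₑ := by
    have hmp := measurePreserving_Hmul_right (Hinv q)
    change ∫⁻ p, ‖f (Hmul p (Hinv q))‖ₑ ^ 2 * ‖g q‖ₑ = _
    rw [lintegral_mul_const _ (f := fun p => ‖f (Hmul p (Hinv q))‖ₑ ^ 2)
        ((hf.comp hmp.measurable).enorm.pow_const 2),
      hmp.lintegral_comp (f := fun p => ‖f p‖ₑ ^ 2) (hf.enorm.pow_const 2)]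
  calc ∫⁻ p, ‖Hconv f g p‖ₑ ^ 2
      ≤ ∫⁻ p, (∫⁻ q, ‖g q‖ₑ) * ∫⁻ q, K (p, q) := lintegral_mono pointwise
    _ = (∫⁻ q, ‖g q‖ₑ) * ∫⁻ q, ∫⁻ p, K (p, q) := by
        rw [lintegral_const_mul _ hK.lintegral_prod_right',
          lintegral_lintegral_swap hK.aemeasurable]
    _ = (∫⁻ q, ‖g q‖ₑ) ^ 2 * ∫⁻ p, ‖f p‖ₑ ^ 2 := by
        simp_rw [right_invariance, lintegral_const_mul _ hg.enorm]
        ring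

lemma volume_Icc_inter_Icc_eq_zero {a b : ℝ} (h : a ≤ |b|) :
    volume (Set.Icc 0 a ∩ Set.Icc b (b + a)) = 0 := by
  rw [Set.Icc_inter_Icc, Real.volume_Icc, ENNReal.ofReal_eq_zero, sub_nonpos]
  rcases le_abs'.mp h with hb | hb
  · exact (min_le_right _ _).trans (by linarith [le_max_left 0 b])
  · exact (min_le_left _ _).trans (hb.trans (le_max_right _ _))

lemma one_le_abs_intCast {z : ℤ} (hz : z ≠ 0) : (1 : ℝ) ≤ |(z : ℝ)| := by
  exact_mod_cast Int.one_le_abs hz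

def latticePoint (j : ℤ × ℤ × ℤ) : ℝ × ℝ × ℝ := (2 * j.1, j.2.1, j.2.2)

open Set in
lemma volume_Q_inter_latticeTranslate {d : ℤ × ℤ × ℤ} (hd : d ≠ 0) :
    volume (Q ∩ Hmul (Hinv (latticePoint d)) ⁻¹' Q) = 0 := by
  obtain ⟨k, l, m⟩ := d
  have hmem : ∀ p ∈ Q ∩ Hmul (Hinv (latticePoint (k, l, m))) ⁻¹' Q,
      p.1 ∈ Icc 0 2 ∩ Icc (2 * k : ℝ) (2 * k + 2) ∧
      (k = 0 → p.2.1 ∈ Icc 0 1 ∩ Icc (l : ℝ) (l + 1)) ∧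
      (k = 0 → l = 0 → p.2.2 ∈ Icc 0 1 ∩ Icc (m : ℝ) (m + 1)) := by
    rintro ⟨x, y, t⟩ ⟨⟨hx, hy, ht⟩, hx', hy', ht'⟩
    simp only [latticePoint, Hmul, Hinv, mem_Icc] at *
    refine ⟨⟨hx, by constructor <;> linarith⟩, fun hk => ⟨hy, ?_⟩, fun hk hl => ⟨ht, ?_⟩⟩
    · constructor <;> linarith
    · subst hk hl
      simp only [Int.cast_zero] at ht'
      constructor <;> linarith
  rw [Measure.volume_eq_prod, Measure.volume_eq_prod]
  by_cases hk : k = 0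
  · by_cases hl : l = 0
    · have hm : m ≠ 0 := by rintro rfl; exact hd (by rw [hk, hl]; rfl)
      refine measure_mono_null (t := univ ×ˢ univ ×ˢ _)
        (fun p hp => ⟨trivial, trivial, (hmem p hp).2.2 hk hl⟩) ?_
      simp [Measure.prod_prod, volume_Icc_inter_Icc_eq_zero (one_le_abs_intCast hm)]
    · refine measure_mono_null (t := univ ×ˢ _ ×ˢ univ)
        (fun p hp => ⟨trivial, (hmem p hp).2.1 hk, trivial⟩) ?_
      simp [Measure.prod_prod, volume_Icc_inter_Icc_eq_zero (one_le_abs_intCast hl)]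
  · refine measure_mono_null (t := _ ×ˢ univ) (fun p hp => ⟨(hmem p hp).1, trivial⟩) ?_
    have h2k : (2 : ℝ) ≤ |2 * (k : ℝ)| := by
      rw [abs_mul, abs_two]
      linarith [one_le_abs_intCast hk]
    simp [Measure.prod_prod, volume_Icc_inter_Icc_eq_zero h2k]

-- The lattice is a subgroup: thanks to the factor `2`, the central term of
-- `(latticePoint i)⁻¹ * latticePoint j` is an integer.
lemma Hinv_latticePoint_mul (i j : ℤ × ℤ × ℤ) (p : ℝ × ℝ × ℝ) :
    Hmul (Hinv (latticePoint (j.1 - i.1, j.2.1 - i.2.1, j.2.2 - i.2.2 + i.1 * j.2.1 - j.1 * i.2.1)))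
      (Hmul (Hinv (latticePoint i)) p) = Hmul (Hinv (latticePoint j)) p := by
  ext <;> simp only [latticePoint, Hmul, Hinv] <;> push_cast <;> ring

lemma volume_latticeTranslate_inter {i j : ℤ × ℤ × ℤ} (hij : i ≠ j) :
    volume (Hmul (Hinv (latticePoint i)) ⁻¹' Q ∩ Hmul (Hinv (latticePoint j)) ⁻¹' Q) = 0 := by
  set d : ℤ × ℤ × ℤ := (j.1 - i.1, j.2.1 - i.2.1, j.2.2 - i.2.2 + i.1 * j.2.1 - j.1 * i.2.1)
  have hd : d ≠ 0 := by
    obtain ⟨k, l, m⟩ := i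
    obtain ⟨k', l', m'⟩ := j
    simp only [d, ne_eq, Prod.ext_iff, Prod.fst_zero, Prod.snd_zero, sub_eq_zero] at hij ⊢
    grind
  have hset : Hmul (Hinv (latticePoint i)) ⁻¹' Q ∩ Hmul (Hinv (latticePoint j)) ⁻¹' Q =
      Hmul (Hinv (latticePoint i)) ⁻¹' (Q ∩ Hmul (Hinv (latticePoint d)) ⁻¹' Q) := by
    ext p
    simp only [Set.mem_inter_iff, Set.mem_preimage, d, Hinv_latticePoint_mul]
  rw [hset]
  exact (measurePreserving_Hmul_left _).preimage_null (volume_Q_inter_latticeTranslate hd)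

lemma measurableSet_Q : MeasurableSet Q :=
  measurableSet_Icc.prod (measurableSet_Icc.prod measurableSet_Icc)

lemma volume_Q : volume Q = 2 := by
  simp only [Q, Measure.volume_eq_prod, Measure.prod_prod, Real.volume_Icc]
  norm_num

lemma phi_one_eq : phi 1 = Q.indicator fun _ => (√2)⁻¹ := by
  funext p
  rw [phi.eq_2]

lemma phi_succ {n : ℕ} (hn : 1 ≤ n) : phi (n + 1) = Hconv (phi n) (phi 1) := by
  obtain ⟨m, rfl⟩ := Nat.exists_eq_add_of_le' hn
  exact phi.eq_3 m

lemma measurable_phi : ∀ n, Measurable (phi n)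
  | 0 => by rw [phi.eq_1]; exact measurable_const
  | 1 => by rw [phi_one_eq]; exact measurable_const.indicator measurableSet_Q
  | n + 2 => by rw [phi.eq_3]; exact (measurable_phi (n + 1)).Hconv (measurable_phi 1)

lemma integrable_phi_one : Integrable (phi 1) := by
  rw [phi_one_eq, integrable_indicator_iff measurableSet_Q]
  exact integrableOn_const (by simp [volume_Q])

lemma exists_abs_phi_le : ∀ n, ∃ C, ∀ p, |phi n p| ≤ C
  | 0 => ⟨0, fun p => by simp [phi.eq_1]⟩
  | 1 => ⟨(√2)⁻¹, fun p => by
      rw [phi_one_eq]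
      by_cases hp : p ∈ Q <;> simp [hp, abs_of_nonneg]⟩
  | n + 2 =>
    have ⟨C, hC⟩ := exists_abs_phi_le (n + 1)
    ⟨C * ∫ q, |phi 1 q|, by rw [phi.eq_3]; exact abs_Hconv_le hC integrable_phi_one⟩

lemma enorm_phi_one_eq (p : ℝ × ℝ × ℝ) :
    ‖phi 1 p‖ₑ = Q.indicator (fun _ => ENNReal.ofReal (√2)⁻¹) p := by
  rw [phi_one_eq, enorm_indicator_eq_indicator_enorm, Real.enorm_of_nonneg (by positivity)]

lemma lintegral_enorm_phi_one_sq : (∫⁻ q, ‖phi 1 q‖ₑ) ^ 2 = 2 := by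
  simp only [enorm_phi_one_eq]
  rw [lintegral_indicator_const measurableSet_Q, volume_Q, ← ENNReal.ofReal_ofNat 2,
    ← ENNReal.ofReal_mul (by positivity), ← ENNReal.ofReal_pow (by positivity)]
  congr 1
  rw [mul_pow, inv_pow, Real.sq_sqrt zero_le_two]
  norm_num

lemma lintegral_enorm_Ltr_phi_one_sq (a : ℝ × ℝ × ℝ) : ∫⁻ p, ‖Ltr a (phi 1) p‖ₑ ^ 2 = 1 := by
  have hsq (p : ℝ × ℝ × ℝ) : ‖phi 1 p‖ₑ ^ 2 = Q.indicator (fun _ => 2⁻¹) p := by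
    by_cases hp : p ∈ Q
    · rw [enorm_phi_one_eq, Set.indicator_of_mem hp, Set.indicator_of_mem hp,
        ← ENNReal.ofReal_pow (by positivity), inv_pow, Real.sq_sqrt zero_le_two,
        ENNReal.ofReal_inv_of_pos zero_lt_two, ENNReal.ofReal_ofNat]
    · simp [enorm_phi_one_eq, hp]
  change ∫⁻ p, ‖phi 1 (Hmul (Hinv a) p)‖ₑ ^ 2 = 1
  rw [(measurePreserving_Hmul_left (Hinv a)).lintegral_comp (f := fun p => ‖phi 1 p‖ₑ ^ 2)
      ((measurable_phi 1).enorm.pow_const 2)]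
  simp only [hsq, lintegral_indicator_const measurableSet_Q, volume_Q]
  exact ENNReal.inv_mul_cancel two_ne_zero ENNReal.ofNat_ne_top

lemma sq_sum_eq_sum_sq_of_mul_eq_zero {ι : Type*} (s : Finset ι) {x : ι → ℝ}
    (h : ∀ i ∈ s, ∀ j ∈ s, i ≠ j → x i * x j = 0) :
    (∑ i ∈ s, x i) ^ 2 = ∑ i ∈ s, x i ^ 2 := by
  rw [sq, Finset.sum_mul_sum]
  refine Finset.sum_congr rfl fun i hi => ?_
  rw [Finset.sum_eq_single_of_mem i hi fun j hj hji => h i hi j hj hji.symm, sq]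

lemma enorm_sq_eq_ofReal (x : ℝ) : ‖x‖ₑ ^ 2 = ENNReal.ofReal (x ^ 2) := by
  rw [Real.enorm_eq_ofReal_abs, ← ENNReal.ofReal_pow (abs_nonneg x), sq_abs]

lemma lintegral_enorm_sum_sq_of_ae_mul_eq_zero {α ι : Type*} [MeasurableSpace α]
    {μ : Measure α} (s : Finset ι) {f : ι → α → ℝ} (hf : ∀ i ∈ s, AEMeasurable (f i) μ)
    (h : ∀ i ∈ s, ∀ j ∈ s, i ≠ j → ∀ᵐ a ∂μ, f i a * f j a = 0) :
    ∫⁻ a, ‖∑ i ∈ s, f i a‖ₑ ^ 2 ∂μ = ∑ i ∈ s, ∫⁻ a, ‖f i a‖ₑ ^ 2 ∂μ := by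
  have hae : ∀ᵐ a ∂μ, ∀ i ∈ s, ∀ j ∈ s, i ≠ j → f i a * f j a = 0 := by
    simpa only [Filter.eventually_all_finset, Filter.eventually_imp_distrib_left] using h
  rw [← lintegral_finsetSum' s fun i hi => (hf i hi).enorm.pow_const 2]
  refine lintegral_congr_ae (hae.mono fun a ha => ?_)
  simp only [enorm_sq_eq_ofReal]
  rw [sq_sum_eq_sum_sq_of_mul_eq_zero s ha, ENNReal.ofReal_sum_of_nonneg fun i _ => sq_nonneg _]

lemma lintegral_enorm_sum_Ltr_phi_one_sq (F : Finset (ℤ × ℤ × ℤ)) (c : ℤ × ℤ × ℤ → ℝ) :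
    ∫⁻ p, ‖∑ j ∈ F, c j * Ltr (latticePoint j) (phi 1) p‖ₑ ^ 2 = ∑ j ∈ F, ‖c j‖ₑ ^ 2 := by
  have hmeas (j : ℤ × ℤ × ℤ) : Measurable (Ltr (latticePoint j) (phi 1)) :=
    (measurable_phi 1).Ltr _
  rw [lintegral_enorm_sum_sq_of_ae_mul_eq_zero F
    (fun j _ => ((hmeas j).const_mul _).aemeasurable) ?disjoint]
  · refine Finset.sum_congr rfl fun j _ => ?_
    simp only [enorm_mul, mul_pow]
    rw [lintegral_const_mul _ ((hmeas j).enorm.pow_const 2), lintegral_enorm_Ltr_phi_one_sq,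
      mul_one]
  case disjoint =>
    intro i _ j _ hij
    filter_upwards [measure_eq_zero_iff_ae_notMem.1 (volume_latticeTranslate_inter hij)] with p hp
    rw [Set.mem_inter_iff, not_and_or, Set.mem_preimage, Set.mem_preimage] at hp
    rcases hp with hp | hp <;> simp [Ltr, phi_one_eq, hp]

lemma lintegral_enorm_sum_Ltr_phi_sq_le (F : Finset (ℤ × ℤ × ℤ)) (c : ℤ × ℤ × ℤ → ℝ) {n : ℕ}
    (hn : 1 ≤ n) :
    ∫⁻ p, ‖∑ j ∈ F, c j * Ltr (latticePoint j) (phi n) p‖ₑ ^ 2 ≤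
      2 ^ (n - 1) * ∑ j ∈ F, ‖c j‖ₑ ^ 2 := by
  induction n, hn using Nat.le_induction with
  | base => simp [lintegral_enorm_sum_Ltr_phi_one_sq]
  | succ n hn ih =>
    obtain ⟨C, hC⟩ := exists_abs_phi_le n
    set S := fun p => ∑ j ∈ F, c j * Ltr (latticePoint j) (phi n) p
    have hS : Measurable S :=
      Finset.measurable_sum _ fun j _ => ((measurable_phi n).Ltr _).const_mul _
    have hconv : (fun p => ∑ j ∈ F, c j * Ltr (latticePoint j) (phi (n + 1)) p) =
        Hconv S (phi 1) := by
      rw [Hconv_sum F c fun j _ => integrable_Hconv_integrand ((measurable_phi n).Ltr _)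
        (fun p => hC _) integrable_phi_one, phi_succ hn]
      simp only [Ltr_Hconv]
    calc ∫⁻ p, ‖∑ j ∈ F, c j * Ltr (latticePoint j) (phi (n + 1)) p‖ₑ ^ 2
        = ∫⁻ p, ‖Hconv S (phi 1) p‖ₑ ^ 2 := by rw [← hconv]
      _ ≤ (∫⁻ q, ‖phi 1 q‖ₑ) ^ 2 * ∫⁻ p, ‖S p‖ₑ ^ 2 :=
          lintegral_enorm_Hconv_sq_le hS (measurable_phi 1)
      _ ≤ 2 * (2 ^ (n - 1) * ∑ j ∈ F, ‖c j‖ₑ ^ 2) := by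
          rw [lintegral_enorm_phi_one_sq]
          gcongr
      _ = 2 ^ (n + 1 - 1) * ∑ j ∈ F, ‖c j‖ₑ ^ 2 := by
          rw [← mul_assoc, ← pow_succ', Nat.sub_add_cancel hn, Nat.add_sub_cancel]

lemma integral_sq_le_of_lintegral_enorm_sq_le {α : Type*} [MeasurableSpace α] {μ : Measure α}
    {f : α → ℝ} (hf : AEStronglyMeasurable f μ) {b : ℝ} (hb : 0 ≤ b)
    (h : ∫⁻ a, ‖f a‖ₑ ^ 2 ∂μ ≤ ENNReal.ofReal b) : ∫ a, f a ^ 2 ∂μ ≤ b := by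
  rw [integral_eq_lintegral_of_nonneg_ae (ae_of_all _ fun a => sq_nonneg _) (hf.pow 2)]
  simp only [← enorm_sq_eq_ofReal]
  exact ENNReal.toReal_le_of_le_ofReal hb h

theorem upper_riesz_bound (n : ℕ) (hn : 1 ≤ n) :
    ∃ B : ℝ, 0 < B ∧ B = 2 ^ (n - 1) ∧
      ∀ (F : Finset (ℤ × ℤ × ℤ)) (c : ℤ × ℤ × ℤ → ℝ),
        (∫ p : ℝ × ℝ × ℝ,
            (∑ j ∈ F, c j *
              Ltr ((2 * j.1 : ℝ), (j.2.1 : ℝ), (j.2.2 : ℝ)) (phi n) p) ^ 2) ≤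
          B * ∑ j ∈ F, (c j) ^ 2 := by
  refine ⟨2 ^ (n - 1), by positivity, rfl, fun F c => ?_⟩
  have hS : Measurable fun p => ∑ j ∈ F, c j * Ltr (latticePoint j) (phi n) p :=
    Finset.measurable_sum _ fun j _ => ((measurable_phi n).Ltr _).const_mul _
  refine integral_sq_le_of_lintegral_enorm_sq_le hS.aestronglyMeasurable (by positivity) ?_
  calc ∫⁻ p, ‖∑ j ∈ F, c j * Ltr (latticePoint j) (phi n) p‖ₑ ^ 2
      ≤ 2 ^ (n - 1) * ∑ j ∈ F, ‖c j‖ₑ ^ 2 := lintegral_enorm_sum_Ltr_phi_sq_le F c hn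
    _ = ENNReal.ofReal (2 ^ (n - 1) * ∑ j ∈ F, c j ^ 2) := by
      rw [ENNReal.ofReal_mul (by positivity), ENNReal.ofReal_pow zero_le_two,
        ENNReal.ofReal_sum_of_nonneg fun j _ => sq_nonneg _]
      simp only [enorm_sq_eq_ofReal, ENNReal.ofReal_ofNat]
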